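/- arXiv:1704.05722 — 2 statements merged into one kernel-verified Lean document; each statement's English description precedes it below -/
import Mathlib

section
/- For the function M(s) = ∫₀^s t·μ(t) dt with μ the Langevin law, it holds that (1/2)s² ≤ M(s) ≤ (1/2)(1 + γ M_s/3) s² for all s ≥ 0, with equality (on either side) if and only if s = 0. -/
/-! For `t > 0` one has `t μ(t) = t + M_s L(γ t)` with `L(x) = coth x - 1/x` the Langevin
function, and `0 < L(x) < x/3` for `x > 0`. Hence `t < t μ(t) < (1 + γ M_s/3) t` on `(0, s]`, and
integrating these strict inequalities over `[0, s]` gives both bounds, strict as soon as `s > 0`. -/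

open Real Set MeasureTheory intervalIntegral

noncomputable def langevin (x : ℝ) : ℝ := cosh x / sinh x - 1 / x

lemma pos_of_hasDerivAt_pos {f f' : ℝ → ℝ} (hf : ∀ x, HasDerivAt f (f' x) x) (hf0 : f 0 = 0)
    (hf' : ∀ x, 0 < x → 0 < f' x) {x : ℝ} (hx : 0 < x) : 0 < f x := by
  have hmono : StrictMonoOn f (Ici 0) := by
    refine strictMonoOn_of_hasDerivWithinAt_pos (convex_Ici 0)
      (continuous_iff_continuousAt.2 fun y ↦ (hf y).continuousAt).continuousOn
      (fun y _ ↦ (hf y).hasDerivWithinAt) ?_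
    rw [interior_Ici]
    exact hf'
  simpa [hf0] using hmono self_mem_Ici hx.le hx

lemma sinh_lt_mul_cosh {x : ℝ} (hx : 0 < x) : sinh x < x * cosh x := by
  have hderiv (y : ℝ) : HasDerivAt (fun y ↦ y * cosh y - sinh y) (y * sinh y) y :=
    (((hasDerivAt_id' y).mul (hasDerivAt_cosh y)).sub (hasDerivAt_sinh y)).congr_deriv (by ring)
  have := pos_of_hasDerivAt_pos hderiv (by simp) (fun y hy ↦ mul_pos hy (sinh_pos_iff.2 hy)) hx
  linarith

lemma three_mul_mul_cosh_sub_sinh_lt {x : ℝ} (hx : 0 < x) :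
    3 * (x * cosh x - sinh x) < x ^ 2 * sinh x := by
  have hderiv (y : ℝ) : HasDerivAt (fun y ↦ y ^ 2 * sinh y - 3 * (y * cosh y - sinh y))
      (y * (y * cosh y - sinh y)) y :=
    (((hasDerivAt_pow 2 y).mul (hasDerivAt_sinh y)).sub
      ((((hasDerivAt_id' y).mul (hasDerivAt_cosh y)).sub (hasDerivAt_sinh y)).const_mul 3))
      |>.congr_deriv (by push_cast; ring)
  have := pos_of_hasDerivAt_pos hderiv (by simp)
    (fun y hy ↦ mul_pos hy (sub_pos.2 (sinh_lt_mul_cosh hy))) hx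
  linarith

lemma langevin_pos {x : ℝ} (hx : 0 < x) : 0 < langevin x := by
  rw [langevin, sub_pos, div_lt_div_iff₀ hx (sinh_pos_iff.2 hx)]
  linarith [sinh_lt_mul_cosh hx]

lemma langevin_lt_div_three {x : ℝ} (hx : 0 < x) : langevin x < x / 3 := by
  have hs := sinh_pos_iff.2 hx
  rw [langevin, div_sub_div _ _ hs.ne' hx.ne', div_lt_div_iff₀ (by positivity) three_pos]
  nlinarith [three_mul_mul_cosh_sub_sinh_lt hx]

@[fun_prop]
lemma measurable_langevin : Measurable langevin := by
  unfold langevin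
  fun_prop

lemma intervalIntegrable_of_le_of_le {μ : Measure ℝ} {f g h : ℝ → ℝ} {a b : ℝ}
    (hab : a ≤ b)
    (hf : AEStronglyMeasurable f (μ.restrict (Ioc a b)))
    (hg : IntervalIntegrable g μ a b) (hh : IntervalIntegrable h μ a b)
    (hgf : ∀ x ∈ Ioc a b, g x ≤ f x) (hfh : ∀ x ∈ Ioc a b, f x ≤ h x) :
    IntervalIntegrable f μ a b := by
  rw [intervalIntegrable_iff_integrableOn_Ioc_of_le hab] at hg hh ⊢
  exact integrable_of_le_of_le hf ((ae_restrict_iff' measurableSet_Ioc).2 (.of_forall hgf))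
    ((ae_restrict_iff' measurableSet_Ioc).2 (.of_forall hfh)) hg hh

lemma integral_lt_integral_of_lt_on_Ioo {f g : ℝ → ℝ} {a b : ℝ} (hab : a < b)
    (hf : IntervalIntegrable f volume a b) (hg : IntervalIntegrable g volume a b)
    (hlt : ∀ x ∈ Ioo a b, f x < g x) : ∫ x in a..b, f x < ∫ x in a..b, g x := by
  rw [← sub_pos, ← integral_sub hg hf]
  exact intervalIntegral_pos_of_pos_on (hg.sub hf) (fun x hx ↦ sub_pos.2 (hlt x hx)) hab

lemma intervalIntegral_mem_Ioo_of_mul_lt_of_lt_mul {f : ℝ → ℝ} {a b s : ℝ} (hs : 0 < s)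
    (hf : AEStronglyMeasurable f (volume.restrict (Ioc 0 s)))
    (hlow : ∀ t ∈ Ioc 0 s, a * t < f t) (hupp : ∀ t ∈ Ioc 0 s, f t < b * t) :
    ∫ t in 0..s, f t ∈ Ioo (a * (s ^ 2 / 2)) (b * (s ^ 2 / 2)) := by
  have hlin (c : ℝ) : IntervalIntegrable (fun t ↦ c * t) volume 0 s :=
    intervalIntegrable_id.const_mul c
  have hint : IntervalIntegrable f volume 0 s :=
    intervalIntegrable_of_le_of_le hs.le hf (hlin a) (hlin b)
      (fun t ht ↦ (hlow t ht).le) (fun t ht ↦ (hupp t ht).le)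
  have hlin_integral (c : ℝ) : ∫ t in 0..s, c * t = c * (s ^ 2 / 2) := by
    rw [intervalIntegral.integral_const_mul, integral_id]
    ring
  rw [← hlin_integral a, ← hlin_integral b]
  exact ⟨integral_lt_integral_of_lt_on_Ioo hs (hlin a) hint
      fun t ht ↦ hlow t (Ioo_subset_Ioc_self ht),
    integral_lt_integral_of_lt_on_Ioo hs hint (hlin b)
      fun t ht ↦ hupp t (Ioo_subset_Ioc_self ht)⟩

theorem langevin_M_bounds_general (Ms γ : ℝ) (hMs : 0 < Ms) (hγ : 0 < γ)
    (μ : ℝ → ℝ)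
    (hμ : ∀ s : ℝ, s ≠ 0 →
      μ s = 1 + (Ms / s) * (Real.cosh (γ * s) / Real.sinh (γ * s) - 1 / (γ * s)))
    (M : ℝ → ℝ) (hM : ∀ s : ℝ, M s = ∫ t in (0:ℝ)..s, t * μ t) :
    ∀ s : ℝ, 0 ≤ s →
      (1 / 2 * s ^ 2 ≤ M s ∧ M s ≤ 1 / 2 * (1 + γ * Ms / 3) * s ^ 2) ∧
      (M s = 1 / 2 * s ^ 2 ↔ s = 0) ∧
      (M s = 1 / 2 * (1 + γ * Ms / 3) * s ^ 2 ↔ s = 0) := by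
  intro s hs
  rcases hs.eq_or_lt with rfl | hs
  · simp [hM]
  have hμt (t : ℝ) (ht : 0 < t) : t * μ t = t + Ms * langevin (γ * t) := by
    rw [hμ t ht.ne', langevin]
    field_simp
  have hlow (t : ℝ) (ht : 0 < t) : t < t * μ t := by
    rw [hμt t ht]
    linarith [mul_pos hMs (langevin_pos (mul_pos hγ ht))]
  have hupp (t : ℝ) (ht : 0 < t) : t * μ t < (1 + γ * Ms / 3) * t := by
    rw [hμt t ht]
    linarith [mul_lt_mul_of_pos_left (langevin_lt_div_three (mul_pos hγ ht)) hMs]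
  have hmeas : AEStronglyMeasurable (fun t ↦ t * μ t) (volume.restrict (Ioc 0 s)) :=
    (by fun_prop : Measurable fun t ↦ t + Ms * langevin (γ * t)).aestronglyMeasurable.congr <|
      (ae_restrict_iff' measurableSet_Ioc).2 (.of_forall fun t ht ↦ (hμt t ht.1).symm)
  obtain ⟨hM_gt, hM_lt⟩ := hM s ▸ intervalIntegral_mem_Ioo_of_mul_lt_of_lt_mul hs hmeas
    (a := 1) (fun t ht ↦ by rw [one_mul]; exact hlow t ht.1) (fun t ht ↦ hupp t ht.1)
  refine ⟨⟨by linarith, by linarith⟩, ⟨?_, ?_⟩, ⟨?_, ?_⟩⟩ <;> intro h <;> linarith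

/-- For `M(s) = ∫₀ˢ t·μ(t) dt` with `μ` the Langevin law, one has
`s²/2 ≤ M(s) ≤ (1/2)(1 + γ·Ms/3)s²` for `s ≥ 0`, with equality on either side iff `s = 0`. -/
theorem langevin_M_bounds (Ms γ : ℝ) (hMs : 0 < Ms) (hγ : 0 < γ)
    (μ : ℝ → ℝ)
    (hμ : ∀ s : ℝ, s ≠ 0 →
      μ s = 1 + (Ms / s) * (Real.cosh (γ * s) / Real.sinh (γ * s) - 1 / (γ * s)))
    (hμ0 : μ 0 = 1 + Ms * γ / 3)
    (M : ℝ → ℝ) (hM : ∀ s : ℝ, M s = ∫ t in (0:ℝ)..s, t * μ t) :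
    ∀ s : ℝ, 0 ≤ s →
      (1 / 2 * s ^ 2 ≤ M s ∧ M s ≤ 1 / 2 * (1 + γ * Ms / 3) * s ^ 2) ∧
      (M s = 1 / 2 * s ^ 2 ↔ s = 0) ∧
      (M s = 1 / 2 * (1 + γ * Ms / 3) * s ^ 2 ↔ s = 0) :=
  langevin_M_bounds_general Ms γ hMs hγ μ hμ M hM
end

section
/- If for all α ∈ [0, C^{-1/2}) a real number δ ≥ 0 satisfies δ ≤ (μ²/b) · (1-α)²/(1 - Cα²), where C > 1, μ > 0, b > 0, then δ ≤ (μ²/b)(1 - 1/C). -/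
/-! The bound is the value of `(1 - α)² / (1 - Cα²)` at its minimiser `α = 1 / C`,
which lies in `[0, C^{-1/2})` because `√C < C`. -/

lemma sq_div_self {G₀ : Type*} [GroupWithZero G₀] (a : G₀) : a ^ 2 / a = a := by
  rcases eq_or_ne a 0 with rfl | ha
  · simp
  · rw [sq, mul_div_cancel_right₀ _ ha]

lemma one_sub_mul_one_div_sq {K : Type*} [Field K] (C : K) : 1 - C * (1 / C) ^ 2 = 1 - 1 / C := by
  rcases eq_or_ne C 0 with rfl | hC
  · simp
  · field_simp

lemma one_sub_one_div_sq_div_one_sub_mul_sq {K : Type*} [Field K] (C : K) :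
    (1 - 1 / C) ^ 2 / (1 - C * (1 / C) ^ 2) = 1 - 1 / C := by
  rw [one_sub_mul_one_div_sq, sq_div_self]

lemma one_div_lt_one_div_sqrt {C : ℝ} (hC : 1 < C) : 1 / C < 1 / √C :=
  one_div_lt_one_div_of_lt (Real.sqrt_pos.2 (by linarith)) (Real.sqrt_lt_self_iff.2 hC)

theorem distance_bound_general (C μ b δ : ℝ) (hC : 1 < C)
    (h : ∀ α : ℝ, 0 ≤ α → α < 1 / Real.sqrt C →
      δ ≤ μ ^ 2 / b * ((1 - α) ^ 2 / (1 - C * α ^ 2))) :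
    δ ≤ μ ^ 2 / b * (1 - 1 / C) := by
  have hα : 0 ≤ 1 / C := (one_div_pos.2 (by linarith)).le
  simpa only [one_sub_one_div_sq_div_one_sub_mul_sq] using
    h (1 / C) hα (one_div_lt_one_div_sqrt hC)

/-- If `δ ≥ 0` satisfies `δ ≤ (μ²/b)(1-α)²/(1-Cα²)` for every `α ∈ [0, C^{-1/2})`
(with `C > 1`, `μ > 0`, `b > 0`), then `δ ≤ (μ²/b)(1 - 1/C)`. -/
theorem distance_bound (C μ b δ : ℝ) (hC : 1 < C) (hμ : 0 < μ) (hb : 0 < b)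
    (hδ : 0 ≤ δ)
    (h : ∀ α : ℝ, 0 ≤ α → α < 1 / Real.sqrt C →
      δ ≤ μ ^ 2 / b * ((1 - α) ^ 2 / (1 - C * α ^ 2))) :
    δ ≤ μ ^ 2 / b * (1 - 1 / C) :=
  distance_bound_general C μ b δ hC h
end
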